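/- Let q be an odd prime power, v ≥ 1, n = 2^v, and t an integer with t ≢ 0 (mod 2^v) and qt ≡ t (mod 2^v). Then a Type-I duadic splitting of Z/2^vZ given by the translation τ_t: i ↦ i+t exists if and only if ν_2(t) < ν_2(q−1). -/

import Mathlib

/-!
If `ν₂(q - 1) ≤ ν₂(t)`, then `(q - 1) x = t` is solvable in `ℤ/2^vℤ`, i.e. `q x = x + t`. For a
splitting `P`, the point `x` lies in `P` iff `q x` does, and iff `x + t` does not: a contradiction.
Conversely, if `a = ν₂(t) < ν₂(q - 1)`, then `q ≡ 1` and `t ≡ 2^a` modulo `2^(a+1)`, so the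
residues whose reduction modulo `2^(a+1)` is below `2^a` are fixed by multiplication by `q` and
exchanged with their complement by translation by `t`.
-/

/-- The 2-adic valuation of an integer, valued in `ℕ∞` (so that `ν₂(0) = ⊤`). -/
noncomputable def nu2 (m : ℤ) : ℕ∞ := emultiplicity 2 m

namespace Finset

variable {α : Type*} [Fintype α] [DecidableEq α]

theorem apply_ne_of_image_eq_self_of_image_eq_compl {f g : α → α} (hf : f.Injective)
    (hg : g.Injective) {P : Finset α} (hfP : P.image f = P) (hgP : P.image g = Pᶜ) (x : α) :
    f x ≠ g x := by
  have hf' : f x ∈ P ↔ x ∈ P := by simpa only [hfP] using hf.mem_finset_image (s := P)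
  have hg' : g x ∈ Pᶜ ↔ x ∈ P := by simpa only [hgP] using hg.mem_finset_image (s := P)
  intro hfg
  rw [mem_compl, ← hfg, hf'] at hg'
  exact iff_not_self hg'.symm

theorem image_filter_univ_eq_self {p : α → Prop} [DecidablePred p] {f : α → α}
    (hf : f.Bijective) (h : ∀ x, p (f x) ↔ p x) :
    (univ.filter p).image f = univ.filter p := by
  ext y
  obtain ⟨x, rfl⟩ := hf.2 y
  simp [hf.1.mem_finset_image, h]

theorem image_filter_univ_eq_compl {p : α → Prop} [DecidablePred p] {f : α → α}
    (hf : f.Bijective) (h : ∀ x, p (f x) ↔ ¬ p x) :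
    (univ.filter p).image f = (univ.filter p)ᶜ := by
  ext y
  obtain ⟨x, rfl⟩ := hf.2 y
  simp [hf.1.mem_finset_image, h]

end Finset

namespace ZMod

theorem val_add_natCast_lt_iff {m : ℕ} [NeZero m] (y : ZMod (2 * m)) :
    (y + m).val < m ↔ ¬ y.val < m := by
  have hm : (m : ZMod (2 * m)).val = m := val_natCast_of_lt (by have := NeZero.pos m; omega)
  have hy := y.val_lt
  rw [val_add, hm]
  rcases lt_or_ge y.val m with hlt | hge
  · rw [Nat.mod_eq_of_lt (by omega)]
    omega
  · rw [Nat.mod_eq_sub_mod (by omega), Nat.mod_eq_of_lt (by omega)]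
    omega

theorem exists_intCast_mul_eq_of_emultiplicity_le {p : ℕ} (hp : p.Prime) (v : ℕ) {c t : ℤ}
    (ht : t ≠ 0) (h : emultiplicity (p : ℤ) c ≤ emultiplicity (p : ℤ) t) :
    ∃ x : ZMod (p ^ v), (c : ZMod (p ^ v)) * x = t := by
  have ht' : FiniteMultiplicity (p : ℤ) t :=
    Int.finiteMultiplicity_iff.mpr ⟨by simpa using hp.ne_one, ht⟩
  have hc : FiniteMultiplicity (p : ℤ) c :=
    emultiplicity_lt_top.mp (h.trans_lt (emultiplicity_lt_top.mpr ht'))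
  obtain ⟨w, hcw, hw⟩ := hc.exists_eq_pow_mul_and_not_dvd
  obtain ⟨s, hts⟩ : (p : ℤ) ^ multiplicity (p : ℤ) c ∣ t :=
    pow_dvd_iff_le_emultiplicity.mpr (hc.emultiplicity_eq_multiplicity ▸ h)
  have hwu : IsUnit (w : ZMod (p ^ v)) := by
    rw [coe_int_isUnit_iff_isCoprime, Nat.cast_pow]
    exact ((Prime.coprime_iff_not_dvd (Nat.prime_iff_prime_int.mp hp)).mpr hw).pow_left
  refine ⟨s * hwu.unit⁻¹, ?_⟩
  rw [hcw, hts]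
  push_cast
  rw [mul_mul_mul_comm, hwu.mul_val_inv, mul_one]

theorem intCast_eq_two_pow_of_emultiplicity_eq {t : ℤ} {a : ℕ} (h : emultiplicity 2 t = a) :
    (t : ZMod (2 * 2 ^ a)) = (2 ^ a : ℕ) := by
  obtain ⟨⟨u, rfl⟩, hu⟩ := emultiplicity_eq_coe.mp h
  obtain ⟨k, rfl⟩ : Odd u := Int.not_even_iff_odd.mp fun ⟨k, hk⟩ => hu ⟨k, by rw [hk]; ring⟩
  have h0 : ((2 * 2 ^ a : ℕ) : ZMod (2 * 2 ^ a)) = 0 := natCast_self _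
  push_cast at h0 ⊢
  linear_combination (k : ZMod (2 * 2 ^ a)) * h0

end ZMod

theorem exists_image_mul_eq_self_and_image_add_eq_compl {R : Type*} [Ring R] [Fintype R]
    [DecidableEq R] {m : ℕ} [NeZero m] (φ : R →+* ZMod (2 * m)) {q t : R} (hq : IsUnit q)
    (hφq : φ q = 1) (hφt : φ t = m) :
    ∃ P : Finset R, P.image (fun i => q * i) = P ∧ P.image (fun i => i + t) = Pᶜ := by
  refine ⟨Finset.univ.filter fun x => (φ x).val < m, ?_, ?_⟩
  · exact Finset.image_filter_univ_eq_self hq.unit.mulLeft_bijective fun x => by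
      rw [map_mul, hφq, one_mul]
  · exact Finset.image_filter_univ_eq_compl (Equiv.addRight t).bijective fun x => by
      rw [map_add, hφt, ZMod.val_add_natCast_lt_iff]

theorem stmt12 (q : ℕ) (hodd : Odd q)
    (v : ℕ) (t : ℤ)
    (ht0 : ¬ ((2 : ℤ) ^ v ∣ t)) :
    (∃ P : Finset (ZMod (2 ^ v)),
        P.image (fun i => (q : ZMod (2 ^ v)) * i) = P ∧
        P.image (fun i => i + (t : ZMod (2 ^ v))) = Pᶜ) ↔
    nu2 t < nu2 ((q : ℤ) - 1) := by
  have ht : t ≠ 0 := by rintro rfl; exact ht0 (dvd_zero _)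
  have hq : IsUnit (q : ZMod (2 ^ v)) :=
    (ZMod.isUnit_iff_coprime q _).mpr (hodd.coprime_two_right.pow_right v)
  obtain ⟨a, ha⟩ : ∃ a : ℕ, nu2 t = a :=
    ⟨_, (Int.finiteMultiplicity_iff.mpr ⟨by norm_num, ht⟩).emultiplicity_eq_multiplicity⟩
  have hav : a < v := by
    have := emultiplicity_lt_iff_not_dvd.mpr ht0
    rwa [← nu2, ha, Nat.cast_lt] at this
  rw [ha]
  constructor
  · rintro ⟨P, hmul, hadd⟩
    by_contra! hle
    obtain ⟨x, hx⟩ := ZMod.exists_intCast_mul_eq_of_emultiplicity_le Nat.prime_two v ht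
      (by exact_mod_cast hle.trans ha.symm.le)
    refine Finset.apply_ne_of_image_eq_self_of_image_eq_compl hq.mul_right_injective
      (add_left_injective _) hmul hadd x ?_
    push_cast at hx
    linear_combination hx
  · intro hlt
    have hdvd : 2 * 2 ^ a ∣ 2 ^ v := by
      rw [← pow_succ']; exact pow_dvd_pow 2 hav
    refine exists_image_mul_eq_self_and_image_add_eq_compl (ZMod.castHom hdvd _) hq ?_ ?_
    · have hq1 : ((2 * 2 ^ a : ℕ) : ℤ) ∣ (q : ℤ) - 1 := by
        rw [Nat.cast_mul, Nat.cast_pow, ← pow_succ', pow_dvd_iff_le_emultiplicity]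
        exact_mod_cast Order.add_one_le_of_lt hlt
      rw [map_natCast]
      exact_mod_cast ((ZMod.intCast_eq_intCast_iff_dvd_sub 1 q _).mpr hq1).symm
    · rw [map_intCast, ZMod.intCast_eq_two_pow_of_emultiplicity_eq ha]
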